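/- arXiv:1008.5131 — 5 statements merged into one kernel-verified Lean document; each statement's English description precedes it below -/
import Mathlib

section
/- Let n ≥ 1, let f : H^{n+1} → H^{n+1} be a map on the closed Euclidean half-space H^{n+1} = ℝ^n × [0,∞), and let g : ℝ^{n+1} → ℝ^{n+1} be defined by g(x_1, …, x_n, t) := f(x_1, …, x_n, |t|). If g has the coarse fixed point property on ℝ^{n+1} — i.e. there exist R > 0, unit vectors ζ_i ∈ S^n, and points x_i ∈ ℝ^{n+1} with ‖x_i‖ → ∞ such that both x_i and g(x_i) lie within distance R of the ray {t·ζ_i : t ≥ 0} — then f has the coarse fixed point property on the half-space: there exist R' > 0, unit vectors ζ'_i ∈ S^n ∩ H^{n+1}, and points x'_i ∈ H^{n+1} with ‖x'_i‖ → ∞ such that both x'_i and f(x'_i) lie within distance R' of the ray {t·ζ'_i : t ≥ 0}. -/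
open Metric Bornology Filter

noncomputable section

abbrev Euc (m : ℕ) : Type := EuclideanSpace ℝ (Fin m)

/-- The closed half-space `ℝ^n × [0,∞)` inside `ℝ^{n+1}`:
points with nonnegative last coordinate. -/
def HalfSpace (n : ℕ) : Set (Euc (n+1)) := {x | 0 ≤ x (Fin.last n)}

/-- The ray `{t • ζ : t ≥ 0}` through `ζ`. -/
def Ray {m : ℕ} (ζ : Euc m) : Set (Euc m) := {y | ∃ t : ℝ, 0 ≤ t ∧ y = t • ζ}

/-- The folding map `(x₁, …, xₙ, t) ↦ (x₁, …, xₙ, |t|)` from `ℝ^{n+1}` onto the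
half-space. -/
def foldMap (n : ℕ) (x : Euc (n+1)) : Euc (n+1) :=
  (WithLp.equiv 2 (Fin (n+1) → ℝ)).symm
    (fun i => if i = Fin.last n then |x (Fin.last n)| else x i)

lemma foldMap_mem (n : ℕ) (x : Euc (n+1)) : foldMap n x ∈ HalfSpace n := by
  simp [foldMap, HalfSpace, abs_nonneg]


lemma foldMap_apply (n : ℕ) (x : Euc (n+1)) (i : Fin (n+1)) :
    foldMap n x i = if i = Fin.last n then |x (Fin.last n)| else x i := rfl

lemma foldMap_norm (n : ℕ) (x : Euc (n+1)) : ‖foldMap n x‖ = ‖x‖ := by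
  simp only [EuclideanSpace.norm_eq, foldMap_apply]
  congr 1
  apply Finset.sum_congr rfl
  intro i _
  split
  · rename_i h; rw [h]; simp [sq_abs]
  · rfl

lemma foldMap_lip (n : ℕ) (a b : Euc (n+1)) :
    dist (foldMap n a) (foldMap n b) ≤ dist a b := by
  simp only [EuclideanSpace.dist_eq, foldMap_apply]
  apply Real.sqrt_le_sqrt
  apply Finset.sum_le_sum
  intro i _
  split
  · rename_i h
    subst h
    simp only [Real.dist_eq]
    rw [sq_abs, sq_abs]
    have h1 : |(|a (Fin.last n)| - |b (Fin.last n)|)| ≤ |a (Fin.last n) - b (Fin.last n)| :=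
      abs_abs_sub_abs_le_abs_sub _ _
    calc (|a (Fin.last n)| - |b (Fin.last n)|)^2 = |(|a (Fin.last n)| - |b (Fin.last n)|)|^2 := by
          rw [sq_abs]
      _ ≤ |a (Fin.last n) - b (Fin.last n)|^2 := by
          exact pow_le_pow_left₀ (abs_nonneg _) h1 2
      _ = (a (Fin.last n) - b (Fin.last n))^2 := by rw [sq_abs]
  · exact le_refl _

lemma foldMap_smul (n : ℕ) (t : ℝ) (ht : 0 ≤ t) (ζ : Euc (n+1)) :
    foldMap n (t • ζ) = t • foldMap n ζ := by
  ext i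
  simp only [foldMap_apply, PiLp.smul_apply, smul_eq_mul]
  split
  · rw [abs_mul, abs_of_nonneg ht]
  · rfl

lemma foldMap_eq_self (n : ℕ) (x : Euc (n+1)) (hx : x ∈ HalfSpace n) : foldMap n x = x := by
  ext i
  simp only [foldMap_apply]
  split
  · rename_i h; subst h; exact abs_of_nonneg hx
  · rfl

lemma infDist_fold (n : ℕ) (x ζ : Euc (n+1)) :
    infDist (foldMap n x) (Ray (foldMap n ζ)) ≤ infDist x (Ray ζ) := by
  by_contra hlt
  push_neg at hlt
  obtain ⟨y, hy, hdy⟩ :=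
    (infDist_lt_iff (show (Ray ζ).Nonempty from ⟨(0 : Euc (n+1)), ⟨0, le_rfl, by simp⟩⟩)).1 hlt
  obtain ⟨t, ht, rfl⟩ := hy
  have h1 : infDist (foldMap n x) (Ray (foldMap n ζ)) ≤ dist (foldMap n x) (foldMap n (t • ζ)) := by
    apply infDist_le_dist_of_mem
    exact ⟨t, ht, (foldMap_smul n t ht ζ)⟩
  have h2 := (foldMap_lip n x (t • ζ)); linarith

/-- If `g(x₁,…,xₙ,t) := f(x₁,…,xₙ,|t|)` has the coarse fixed point property
on `ℝ^{n+1}`, then `f` has the coarse fixed point property on the half-space. -/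
theorem cfpp_of_fold_cfpp (n : ℕ) (hn : 1 ≤ n)
    (f : HalfSpace n → HalfSpace n)
    (g : Euc (n+1) → Euc (n+1))
    (hg : ∀ x : Euc (n+1), g x = (f ⟨foldMap n x, foldMap_mem n x⟩ : Euc (n+1)))
    (hcfpp : ∃ R > (0:ℝ), ∃ ζ : ℕ → Euc (n+1), ∃ x : ℕ → Euc (n+1),
      (∀ i, ‖ζ i‖ = 1) ∧
      Tendsto (fun i => ‖x i‖) atTop atTop ∧
      (∀ i, infDist (x i) (Ray (ζ i)) ≤ R ∧ infDist (g (x i)) (Ray (ζ i)) ≤ R)) :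
    ∃ R' > (0:ℝ), ∃ ζ' : ℕ → Euc (n+1), ∃ x' : ℕ → HalfSpace n,
      (∀ i, ‖ζ' i‖ = 1 ∧ ζ' i ∈ HalfSpace n) ∧
      Tendsto (fun i => ‖(x' i : Euc (n+1))‖) atTop atTop ∧
      (∀ i, infDist (x' i : Euc (n+1)) (Ray (ζ' i)) ≤ R' ∧
            infDist (f (x' i) : Euc (n+1)) (Ray (ζ' i)) ≤ R') := by
  obtain ⟨R, hR, ζ, x, hζ, hx, hd⟩ := hcfpp
  refine ⟨R, hR, fun i => foldMap n (ζ i),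
    fun i => ⟨foldMap n (x i), foldMap_mem n (x i)⟩, ?_, ?_, ?_⟩
  · intro i
    exact ⟨by rw [foldMap_norm]; exact hζ i, foldMap_mem n _⟩
  · simpa only [foldMap_norm] using hx
  · intro i
    constructor
    · exact (infDist_fold n (x i) (ζ i)).trans (hd i).1
    · have hmem : g (x i) ∈ HalfSpace n := by
        rw [hg]; exact (f ⟨foldMap n (x i), foldMap_mem n (x i)⟩).2
      have key : (f ⟨foldMap n (x i), foldMap_mem n (x i)⟩ : Euc (n+1))
          = foldMap n (g (x i)) := by
        rw [foldMap_eq_self n _ hmem, hg]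
      rw [key]
      exact (infDist_fold n (g (x i)) (ζ i)).trans (hd i).2
end
end

section
/- Let E be a real inner product space (e.g. Euclidean space ℝ^m), let T > 0 and K ≥ 0, and let x, y ∈ E satisfy ‖x‖ ≥ 2T and ‖y‖ ≤ K·‖x‖. Suppose there is a point p on the line segment joining −x and y with ‖p‖ ≤ T. Then the distance from y to the ray {s·x : s ≥ 0} is at most 2(K+1)·T. -/
open Metric

noncomputable section

/-- The similar-triangles estimate: if `‖x‖ ≥ 2T`, `‖y‖ ≤ K‖x‖`, and the segment
from `-x` to `y` meets the ball of radius `T` about the origin, then `y` is within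
distance `2(K+1)T` of the ray `{s • x : s ≥ 0}`. -/
theorem dist_to_ray_of_segment_meets_ball
    {E : Type*} [NormedAddCommGroup E] [InnerProductSpace ℝ E]
    (T K : ℝ) (hT : 0 < T) (hK : 0 ≤ K) (x y : E)
    (hx : 2 * T ≤ ‖x‖) (hy : ‖y‖ ≤ K * ‖x‖)
    (hp : ∃ p ∈ segment ℝ (-x) y, ‖p‖ ≤ T) :
    infDist y {z : E | ∃ s : ℝ, 0 ≤ s ∧ z = s • x} ≤ 2 * (K + 1) * T := by
  obtain ⟨p, ⟨a, b, ha, hb, hab, hpe⟩, hpn⟩ := hp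
  have hxpos : 0 < ‖x‖ := lt_of_lt_of_le (by linarith) hx
  -- b > 0
  have hbpos : 0 < b := by
    rcases hb.lt_or_eq with h | h
    · exact h
    · exfalso
      have ha1 : a = 1 := by linarith
      rw [← h] at hpe
      simp [ha1] at hpe
      rw [← hpe] at hpn
      simp at hpn
      linarith
  -- key estimate: a‖x‖ ≤ T + bK‖x‖
  have hax : a * ‖x‖ ≤ T + b * (K * ‖x‖) := by
    have h1 : a • (-x) = p - b • y := by rw [← hpe]; abel
    have h2 : ‖a • (-x)‖ ≤ ‖p‖ + ‖b • y‖ := by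
      rw [h1]; exact norm_sub_le _ _
    have h3 : ‖a • (-x)‖ = a * ‖x‖ := by
      rw [norm_smul, norm_neg, Real.norm_eq_abs, abs_of_nonneg ha]
    have h4 : ‖b • y‖ = b * ‖y‖ := by
      rw [norm_smul, Real.norm_eq_abs, abs_of_nonneg hb]
    rw [h3, h4] at h2
    have : b * ‖y‖ ≤ b * (K * ‖x‖) := mul_le_mul_of_nonneg_left hy hb
    linarith
  -- b ≥ 1/(2(K+1))
  have hbig : 1 / 2 ≤ b * (K + 1) := by
    have ha' : a = 1 - b := by linarith
    rw [ha'] at hax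
    -- (1-b)‖x‖ ≤ T + bK‖x‖  and T ≤ ‖x‖/2
    have hT2 : T ≤ ‖x‖ / 2 := by linarith
    nlinarith
  have hmem : (a / b) • x ∈ {z : E | ∃ s : ℝ, 0 ≤ s ∧ z = s • x} :=
    ⟨a / b, div_nonneg ha hb, rfl⟩
  have hle : infDist y {z : E | ∃ s : ℝ, 0 ≤ s ∧ z = s • x} ≤ dist y ((a / b) • x) := infDist_le_dist_of_mem hmem
  have hdiff : y - (a / b) • x = (1 / b) • p := by
    rw [← hpe]
    match_scalars <;> field_simp
  have hd : dist y ((a / b) • x) ≤ T / b := by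
    rw [dist_eq_norm, hdiff, norm_smul, Real.norm_eq_abs,
      abs_of_nonneg (by positivity : (0:ℝ) ≤ 1 / b)]
    calc 1 / b * ‖p‖ ≤ 1 / b * T := by
          apply mul_le_mul_of_nonneg_left hpn; positivity
      _ = T / b := by ring
  have hfinal : T / b ≤ 2 * (K + 1) * T := by
    rw [div_le_iff₀ hbpos]
    nlinarith
  linarith [hle, hd, hfinal]
end
end

section
/- Let n ≥ 0 and let h : ℝ^{n+1} → ℝ^{n+1} be a coarse map (proper and bornologous). Suppose h does not have the coarse fixed point property; that is, for every R > 0 the set of points x ∈ ℝ^{n+1} for which there exists a unit vector ζ ∈ S^n with both x and h(x) within distance R of the ray {t·ζ : t ≥ 0} is bounded. Define H_t(x) := t·h(x) − (1−t)·x for t ∈ [0,1]. Then the family {H_t} is uniformly proper: for every bounded set B ⊂ ℝ^{n+1}, the set ⋃_{t ∈ [0,1]} H_t^{-1}(B) = {x ∈ ℝ^{n+1} : ∃ t ∈ [0,1], t·h(x) − (1−t)·x ∈ B} is bounded. -/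
/-!
A bornologous map grows at most linearly, so if `H_t(x) = t • h x - (1 - t) • x` lies in the
ball of radius `r` while `‖x‖` is large, then `t` is bounded below by a constant `c`. Then
`h x` lies within `r / c` of the point `((1 - t) / t) • x` on the ray through `x`, so `x`
witnesses the coarse fixed point property at scale `r / c`, and such `x` form a bounded set.
-/

open Metric Bornology Filter

noncomputable section

/-- A coarse map between metric spaces: proper and bornologous. -/
def IsCoarseMap {X Y : Type*} [MetricSpace X] [MetricSpace Y] (f : X → Y) : Prop :=
  (∀ B : Set Y, IsBounded B → IsBounded (f ⁻¹' B)) ∧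
  (∀ R > 0, ∃ S > 0, ∀ x x' : X, dist x x' ≤ R → dist (f x) (f x') ≤ S)

section Growth

variable {E F : Type*} [NormedAddCommGroup E] [NormedSpace ℝ E] {f : E → F} {S : ℝ}

theorem dist_apply_zero_le_mul_of_norm_le_nat [PseudoMetricSpace F]
    (hS : ∀ x x', dist x x' ≤ 1 → dist (f x) (f x') ≤ S) :
    ∀ (k : ℕ) (x : E), ‖x‖ ≤ k → dist (f x) (f 0) ≤ S * k
  | 0, x, hx => by simp [norm_le_zero_iff.mp (by exact_mod_cast hx)]
  | k + 1, x, hx => by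
    have hk : (0 : ℝ) < k + 1 := by positivity
    have hxk : ‖x‖ ≤ k + 1 := by exact_mod_cast hx
    set y : E := ((k : ℝ) / (k + 1)) • x
    have hy : ‖y‖ ≤ k := by
      rw [norm_smul, Real.norm_of_nonneg (by positivity), div_mul_eq_mul_div, div_le_iff₀ hk]
      nlinarith [norm_nonneg x]
    have hxy : dist x y ≤ 1 := by
      have hcoef : 1 - (k : ℝ) / (k + 1) = 1 / (k + 1) := by field_simp; ring
      rw [dist_eq_norm, ← one_smul ℝ x, ← sub_smul, hcoef, norm_smul,
        Real.norm_of_nonneg (by positivity), div_mul_eq_mul_div, div_le_iff₀ hk]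
      linarith
    calc dist (f x) (f 0) ≤ dist (f x) (f y) + dist (f y) (f 0) := dist_triangle _ _ _
      _ ≤ S + S * k := add_le_add (hS x y hxy) (dist_apply_zero_le_mul_of_norm_le_nat hS k y hy)
      _ = S * ↑(k + 1) := by push_cast; ring

theorem dist_apply_zero_le_mul_norm_add_one [PseudoMetricSpace F]
    (hS : ∀ x x', dist x x' ≤ 1 → dist (f x) (f x') ≤ S) (x : E) :
    dist (f x) (f 0) ≤ S * (‖x‖ + 1) := by
  have hS0 : 0 ≤ S := dist_nonneg.trans (hS 0 0 (by simp))
  calc dist (f x) (f 0) ≤ S * ⌈‖x‖⌉₊ :=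
        dist_apply_zero_le_mul_of_norm_le_nat hS _ x (Nat.le_ceil _)
    _ ≤ S * (‖x‖ + 1) := by gcongr; exact (Nat.ceil_lt_add_one (norm_nonneg x)).le

theorem norm_apply_le_mul_norm_of_one_le_norm [SeminormedAddCommGroup F]
    (hS : ∀ x x', dist x x' ≤ 1 → dist (f x) (f x') ≤ S) {x : E} (hx : 1 ≤ ‖x‖) :
    ‖f x‖ ≤ (‖f 0‖ + 2 * S) * ‖x‖ := by
  have hS0 : 0 ≤ S := dist_nonneg.trans (hS 0 0 (by simp))
  have hgrowth := dist_apply_zero_le_mul_norm_add_one hS x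
  rw [dist_eq_norm] at hgrowth
  nlinarith [norm_le_norm_add_norm_sub' (f x) (f 0), norm_nonneg (f 0)]

end Growth

section Homotopy

variable {E : Type*} [NormedAddCommGroup E] [NormedSpace ℝ E]

theorem norm_le_two_mul_of_norm_smul_sub_smul_le {x y : E} {t r : ℝ} (ht : 0 ≤ t)
    (hH : ‖t • y - (1 - t) • x‖ ≤ r) (hr : 2 * r ≤ ‖x‖) : ‖x‖ ≤ 2 * t * (‖x‖ + ‖y‖) := by
  have h := norm_sub_norm_le ((1 - t) • x) (t • y)
  rw [norm_sub_rev, norm_smul, norm_smul, Real.norm_of_nonneg ht] at h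
  nlinarith [le_abs_self (1 - t), norm_nonneg x, Real.norm_eq_abs (1 - t)]

theorem dist_div_smul_eq {x y : E} {t : ℝ} (ht : 0 < t) :
    dist y (((1 - t) / t) • x) = ‖t • y - (1 - t) • x‖ / t := by
  have h : ‖t • (y - ((1 - t) / t) • x)‖ = t * ‖y - ((1 - t) / t) • x‖ := by
    rw [norm_smul, Real.norm_of_nonneg ht.le]
  rw [smul_sub, smul_smul, mul_div_cancel₀ _ ht.ne'] at h
  rw [eq_div_iff ht.ne', dist_eq_norm, h, mul_comm]

end Homotopy

theorem smul_mem_ray_inv_norm_smul {m : ℕ} (x : Euc m) {s : ℝ} (hs : 0 ≤ s) :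
    s • x ∈ Ray (‖x‖⁻¹ • x) := by
  rcases eq_or_ne x 0 with rfl | hx
  · exact ⟨0, le_rfl, by simp⟩
  · refine ⟨s * ‖x‖, by positivity, ?_⟩
    rw [smul_smul, mul_assoc, mul_inv_cancel₀ (norm_ne_zero_iff.mpr hx), mul_one]

theorem exists_ray_near_of_norm_smul_sub_smul_le {m : ℕ} {x y : Euc m} {t r C : ℝ}
    (ht : t ∈ Set.Icc (0 : ℝ) 1) (hy : ‖y‖ ≤ C * ‖x‖) (hx : 2 * r < ‖x‖)
    (hH : ‖t • y - (1 - t) • x‖ ≤ r) :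
    ∃ ζ : Euc m, ‖ζ‖ = 1 ∧
      infDist x (Ray ζ) ≤ 2 * r * (1 + C) ∧ infDist y (Ray ζ) ≤ 2 * r * (1 + C) := by
  have hr : 0 ≤ r := (norm_nonneg _).trans hH
  have hx0 : 0 < ‖x‖ := by linarith
  have ht_lower : 1 ≤ 2 * t * (1 + C) := by
    have := norm_le_two_mul_of_norm_smul_sub_smul_le ht.1 hH hx.le
    refine le_of_mul_le_mul_right ?_ hx0
    nlinarith [ht.1]
  have ht0 : 0 < t := by
    rcases ht.1.eq_or_lt with rfl | h
    · norm_num at ht_lower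
    · exact h
  refine ⟨‖x‖⁻¹ • x, norm_smul_inv_norm (norm_pos_iff.mp hx0), ?_, ?_⟩
  · rw [infDist_zero_of_mem (by simpa using smul_mem_ray_inv_norm_smul x zero_le_one)]
    nlinarith
  · calc infDist y (Ray (‖x‖⁻¹ • x)) ≤ dist y (((1 - t) / t) • x) :=
          infDist_le_dist_of_mem
            (smul_mem_ray_inv_norm_smul x (div_nonneg (sub_nonneg.2 ht.2) ht0.le))
      _ = ‖t • y - (1 - t) • x‖ / t := dist_div_smul_eq ht0
      _ ≤ r / t := by gcongr
      _ ≤ 2 * r * (1 + C) := by rw [div_le_iff₀ ht0]; nlinarith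

/-- If a coarse map `h : ℝ^{n+1} → ℝ^{n+1}` fails the coarse fixed point property,
then the linear homotopy `H_t(x) = t • h(x) - (1-t) • x` is uniformly proper. -/
theorem linear_homotopy_uniformly_proper (n : ℕ)
    (h : Euc (n+1) → Euc (n+1)) (hcoarse : IsCoarseMap h)
    (hnofix : ∀ R > (0:ℝ), IsBounded {x : Euc (n+1) |
      ∃ ζ : Euc (n+1), ‖ζ‖ = 1 ∧
        infDist x (Ray ζ) ≤ R ∧ infDist (h x) (Ray ζ) ≤ R}) :
    ∀ B : Set (Euc (n+1)), IsBounded B →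
      IsBounded {x : Euc (n+1) | ∃ t ∈ Set.Icc (0:ℝ) 1,
        t • h x - (1 - t) • x ∈ B} := by
  intro B hB
  obtain ⟨S, hS0, hS⟩ := hcoarse.2 1 one_pos
  obtain ⟨r, hr, hBr⟩ := hB.subset_closedBall_lt 0 0
  have hR : 0 < 2 * r * (1 + (‖h 0‖ + 2 * S)) := by positivity
  obtain ⟨ρ, hρ⟩ := (hnofix _ hR).subset_closedBall 0
  refine (isBounded_closedBall (x := 0) (r := max ρ (max (2 * r) 1))).subset ?_
  rintro x ⟨t, ht, hxB⟩
  rw [mem_closedBall_zero_iff]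
  by_cases hx : ‖x‖ ≤ max (2 * r) 1
  · exact hx.trans (le_max_right _ _)
  rw [not_le, max_lt_iff] at hx
  have hH : ‖t • h x - (1 - t) • x‖ ≤ r := mem_closedBall_zero_iff.mp (hBr hxB)
  have hhx := norm_apply_le_mul_norm_of_one_le_norm hS hx.2.le
  exact (mem_closedBall_zero_iff.mp
    (hρ (exists_ray_near_of_norm_smul_sub_smul_le ht hhx hx.1 hH))).trans (le_max_left _ _)
end
end

section
/- Let n ≥ 0 and let h : ℝ^{n+1} → ℝ^{n+1} be a coarse map (proper and bornologous) that does not have the coarse fixed point property, i.e. for every R > 0 the set of points x ∈ ℝ^{n+1} for which there exists a unit vector ζ ∈ S^n with both x and h(x) within distance R of the ray {t·ζ : t ≥ 0} is bounded. Then the linear homotopy H : ℝ^{n+1} × [0,1] → ℝ^{n+1}, H_t(x) := t·h(x) − (1−t)·x, from the antipodal map x ↦ −x to h is a coarse homotopy; that is: (1) {H_t} is uniformly proper: for every bounded B ⊂ ℝ^{n+1}, the set ⋃_{t ∈ [0,1]} H_t^{-1}(B) is bounded; (2) {H_t} is uniformly bornologous: for every R > 0 there exists S > 0 such that ‖x −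 x'‖ ≤ R implies ‖H_t(x) − H_t(x')‖ ≤ S for all t ∈ [0,1]; and (3) {H_t} is uniformly pseudocontinuous: there exists R > 0 such that for all x ∈ ℝ^{n+1} and t ∈ [0,1] there is an open neighborhood I of t in [0,1] such that t' ∈ I implies ‖H_t(x) − H_{t'}(x)‖ ≤ R. -/
open Metric Bornology Filter

noncomputable section

/-- If a coarse map `h : ℝ^{n+1} → ℝ^{n+1}` fails the coarse fixed point property,
then the linear homotopy `H_t(x) = t • h(x) - (1-t) • x` from the antipodal map to
`h` is a coarse homotopy: uniformly proper, uniformly bornologous, and uniformly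
pseudocontinuous. -/
theorem linear_homotopy_is_coarse_homotopy (n : ℕ)
    (h : Euc (n+1) → Euc (n+1)) (hcoarse : IsCoarseMap h)
    (hnofix : ∀ R > (0:ℝ), IsBounded {x : Euc (n+1) |
      ∃ ζ : Euc (n+1), ‖ζ‖ = 1 ∧
        infDist x (Ray ζ) ≤ R ∧ infDist (h x) (Ray ζ) ≤ R})
    (H : ℝ → Euc (n+1) → Euc (n+1))
    (hH : ∀ t : ℝ, ∀ x : Euc (n+1), H t x = t • h x - (1 - t) • x) :
    -- (1) uniformly proper
    (∀ B : Set (Euc (n+1)), IsBounded B →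
      IsBounded {x : Euc (n+1) | ∃ t ∈ Set.Icc (0:ℝ) 1, H t x ∈ B}) ∧
    -- (2) uniformly bornologous
    (∀ R > (0:ℝ), ∃ S > (0:ℝ), ∀ x x' : Euc (n+1), ∀ t ∈ Set.Icc (0:ℝ) 1,
      ‖x - x'‖ ≤ R → ‖H t x - H t x'‖ ≤ S) ∧
    -- (3) uniformly pseudocontinuous
    (∃ R > (0:ℝ), ∀ x : Euc (n+1), ∀ t ∈ Set.Icc (0:ℝ) 1,
      ∃ V : Set ℝ, IsOpen V ∧ t ∈ V ∧
        ∀ t' ∈ V ∩ Set.Icc (0:ℝ) 1, ‖H t x - H t' x‖ ≤ R) := by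
  obtain ⟨hprop, hborn⟩ := hcoarse
  refine ⟨?_, ?_, ?_⟩
  · -- (1) uniformly proper
    intro B hB
    obtain ⟨r, hrB⟩ := hB.subset_closedBall 0
    set r' : ℝ := max r 1 with hr'
    have hr0 : (0:ℝ) < r' := lt_of_lt_of_le one_pos (le_max_right _ _)
    have hrB' : B ⊆ closedBall 0 r' :=
      hrB.trans (closedBall_subset_closedBall (le_max_left _ _))
    have key : {x : Euc (n+1) | ∃ t ∈ Set.Icc (0:ℝ) 1, H t x ∈ B} ⊆
        {x : Euc (n+1) | ∃ ζ : Euc (n+1), ‖ζ‖ = 1 ∧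
          infDist x (Ray ζ) ≤ 2*r' ∧ infDist (h x) (Ray ζ) ≤ 2*r'} ∪
        closedBall 0 (2*r') := by
      rintro x ⟨t, ⟨ht0, ht1⟩, hxB⟩
      have hHr : ‖H t x‖ ≤ r' := by
        have := hrB' hxB
        simpa [dist_eq_norm] using this
      rcases le_or_gt t (1/2) with hhalf | hhalf
      · -- t ≤ 1/2, so 1 - t ≥ 1/2
        have h1t : (1:ℝ)/2 ≤ 1 - t := by linarith
        have h1t0 : (0:ℝ) < 1 - t := by linarith
        by_cases hhx : h x = 0
        · right
          have hHx : H t x = -((1 - t) • x) := by rw [hH, hhx]; simp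
          have : (1 - t) * ‖x‖ ≤ r' := by
            have := hHr
            rwa [hHx, norm_neg, norm_smul, Real.norm_eq_abs,
              abs_of_pos h1t0] at this
          have hxn : ‖x‖ ≤ 2*r' := by nlinarith [norm_nonneg x]
          simpa [dist_eq_norm] using hxn
        · left
          refine ⟨‖h x‖⁻¹ • h x, ?_, ?_, ?_⟩
          · rw [norm_smul, norm_inv, norm_norm,
              inv_mul_cancel₀ (norm_ne_zero_iff.2 hhx)]
          · -- x is within 2r' of the ray through h x
            have hmem : (t/(1-t)) • h x ∈ Ray (‖h x‖⁻¹ • h x) := by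
              refine ⟨(t/(1-t)) * ‖h x‖, by positivity, ?_⟩
              rw [smul_smul, mul_assoc,
                mul_inv_cancel₀ (norm_ne_zero_iff.2 hhx), mul_one]
            refine le_trans (infDist_le_dist_of_mem hmem) ?_
            have hxe : x - (t/(1-t)) • h x = -((1-t)⁻¹ • H t x) := by
              rw [hH]
              rw [div_eq_mul_inv]
              have h1t' : (1-t) ≠ 0 := ne_of_gt h1t0
              match_scalars <;> field_simp
            rw [dist_eq_norm, hxe, norm_neg, norm_smul, norm_inv,
              Real.norm_eq_abs, abs_of_pos h1t0]
            calc (1-t)⁻¹ * ‖H t x‖ ≤ 2 * ‖H t x‖ := by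
                  apply mul_le_mul_of_nonneg_right _ (norm_nonneg _)
                  rw [inv_le_comm₀ h1t0 (by norm_num)]
                  linarith
              _ ≤ 2 * r' := by linarith
          · have : h x ∈ Ray (‖h x‖⁻¹ • h x) := by
              refine ⟨‖h x‖, norm_nonneg _, ?_⟩
              rw [smul_smul, mul_inv_cancel₀ (norm_ne_zero_iff.2 hhx), one_smul]
            rw [infDist_zero_of_mem this]
            positivity
      · -- t > 1/2
        have ht0' : (0:ℝ) < t := by linarith
        by_cases hx : x = 0
        · right
          simp [hx]
          positivity
        · left
          refine ⟨‖x‖⁻¹ • x, ?_, ?_, ?_⟩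
          · rw [norm_smul, norm_inv, norm_norm,
              inv_mul_cancel₀ (norm_ne_zero_iff.2 hx)]
          · have : x ∈ Ray (‖x‖⁻¹ • x) := by
              refine ⟨‖x‖, norm_nonneg _, ?_⟩
              rw [smul_smul, mul_inv_cancel₀ (norm_ne_zero_iff.2 hx), one_smul]
            rw [infDist_zero_of_mem this]
            positivity
          · have hmem : ((1-t)/t) • x ∈ Ray (‖x‖⁻¹ • x) := by
              refine ⟨((1-t)/t) * ‖x‖, mul_nonneg (div_nonneg (by linarith) ht0'.le) (norm_nonneg _), ?_⟩
              rw [smul_smul, mul_assoc,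
                mul_inv_cancel₀ (norm_ne_zero_iff.2 hx), mul_one]
            refine le_trans (infDist_le_dist_of_mem hmem) ?_
            have hxe : h x - ((1-t)/t) • x = t⁻¹ • H t x := by
              rw [hH, div_eq_mul_inv]
              have ht' : t ≠ 0 := ne_of_gt ht0'
              match_scalars <;> field_simp
            rw [dist_eq_norm, hxe, norm_smul, norm_inv,
              Real.norm_eq_abs, abs_of_pos ht0']
            calc t⁻¹ * ‖H t x‖ ≤ 2 * ‖H t x‖ := by
                  apply mul_le_mul_of_nonneg_right _ (norm_nonneg _)
                  rw [inv_le_comm₀ ht0' (by norm_num)]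
                  linarith
              _ ≤ 2 * r' := by linarith
    exact ((hnofix (2*r') (by positivity)).union (isBounded_closedBall)).subset key
  · -- (2) uniformly bornologous
    intro R hR
    obtain ⟨S, hS0, hS⟩ := hborn R hR
    refine ⟨S + R, by positivity, ?_⟩
    intro x x' t ⟨ht0, ht1⟩ hxx
    have hd : ‖h x - h x'‖ ≤ S := by
      have := hS x x' (by rwa [dist_eq_norm])
      rwa [dist_eq_norm] at this
    have he : H t x - H t x' = t • (h x - h x') - (1 - t) • (x - x') := by
      rw [hH, hH]; module
    rw [he]
    calc ‖t • (h x - h x') - (1 - t) • (x - x')‖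
        ≤ ‖t • (h x - h x')‖ + ‖(1 - t) • (x - x')‖ := norm_sub_le _ _
      _ ≤ S + R := by
          rw [norm_smul, norm_smul, Real.norm_eq_abs, Real.norm_eq_abs,
            abs_of_nonneg ht0, abs_of_nonneg (by linarith : (0:ℝ) ≤ 1 - t)]
          have h1 : t * ‖h x - h x'‖ ≤ S := by nlinarith [norm_nonneg (h x - h x')]
          have h2 : (1 - t) * ‖x - x'‖ ≤ R := by nlinarith [norm_nonneg (x - x')]
          linarith
  · -- (3) uniformly pseudocontinuous
    refine ⟨1, one_pos, ?_⟩
    intro x t _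
    set M : ℝ := ‖h x‖ + ‖x‖ + 1 with hM
    have hM0 : 0 < M := by positivity
    refine ⟨ball t M⁻¹, isOpen_ball, mem_ball_self (by positivity), ?_⟩
    rintro t' ⟨ht', -⟩
    have hd : |t - t'| ≤ M⁻¹ := by
      rw [mem_ball, dist_eq_norm, Real.norm_eq_abs] at ht'
      rw [abs_sub_comm]
      exact ht'.le
    have he : H t x - H t' x = (t - t') • h x + (t - t') • x := by
      rw [hH, hH]; module
    rw [he]
    calc ‖(t - t') • h x + (t - t') • x‖
        ≤ ‖(t - t') • h x‖ + ‖(t - t') • x‖ := norm_add_le _ _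
      _ = |t - t'| * ‖h x‖ + |t - t'| * ‖x‖ := by
          rw [norm_smul, norm_smul, Real.norm_eq_abs]
      _ ≤ M⁻¹ * ‖h x‖ + M⁻¹ * ‖x‖ := by
          gcongr <;> positivity
      _ ≤ 1 := by
          rw [← mul_add, inv_mul_le_iff₀ hM0, mul_one, hM]
          linarith [norm_nonneg (h x), norm_nonneg x]
end
end

section
/- Let m ≥ 1, let T > 0, and let h : ℝ^m → ℝ^m be a map for which there exists K > 0 with ‖h(x)‖ ≤ K · max{‖x‖, 1} for all x ∈ ℝ^m. Set C := 2(K+1). Then for every x ∈ ℝ^m with ‖x‖ ≥ max{2T, 1} such that the closed line segment joining −x and h(x) intersects the closed ball of radius T centered at the origin, the distance from h(x) to the ray {s·x : s ≥ 0} is at most C·T. -/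
open Metric

noncomputable section

/-! Write the point of the segment in the ball as `y = (1 - b) • (-x) + b • h x`. Then
`h x - ((1 - b) / b) • x = b⁻¹ • y`, so `h x` lies within `T / b` of the ray. The weight `b`
cannot be small: `(1 - b) ‖x‖ ≤ b ‖h x‖ + ‖y‖ ≤ b K ‖x‖ + ‖x‖ / 2` forces `2 (K + 1) b ≥ 1`. -/

namespace SegmentRay

variable {E : Type*} [NormedAddCommGroup E] [NormedSpace ℝ E]

def posRay (x : E) : Set E := {z | ∃ s : ℝ, 0 ≤ s ∧ z = s • x}

theorem infDist_posRay_le {x z : E} {b : ℝ} (hb0 : 0 < b) (hb1 : b ≤ 1) :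
    infDist z (posRay x) ≤ ‖(1 - b) • (-x) + b • z‖ / b := by
  have hmem : ((1 - b) / b) • x ∈ posRay x :=
    ⟨(1 - b) / b, div_nonneg (by linarith) hb0.le, rfl⟩
  have hdiff : z - ((1 - b) / b) • x = b⁻¹ • ((1 - b) • (-x) + b • z) := by
    rw [smul_add, smul_smul, smul_smul, inv_mul_cancel₀ hb0.ne', one_smul, smul_neg,
      div_eq_inv_mul]
    abel
  calc infDist z (posRay x) ≤ dist z (((1 - b) / b) • x) := infDist_le_dist_of_mem hmem
    _ = ‖(1 - b) • (-x) + b • z‖ / b := by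
      rw [dist_eq_norm, hdiff, norm_smul, norm_inv, Real.norm_of_nonneg hb0.le, inv_mul_eq_div]

theorem one_sub_mul_norm_le (x z : E) {b : ℝ} (hb : 0 ≤ b) :
    (1 - b) * ‖x‖ ≤ b * ‖z‖ + ‖(1 - b) • (-x) + b • z‖ :=
  calc (1 - b) * ‖x‖ ≤ ‖(1 - b) • x‖ := by
        rw [norm_smul]; gcongr; exact Real.le_norm_self _
    _ = ‖b • z - ((1 - b) • (-x) + b • z)‖ := by rw [smul_neg]; congr 1; abel
    _ ≤ ‖b • z‖ + ‖(1 - b) • (-x) + b • z‖ := norm_sub_le _ _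
    _ = b * ‖z‖ + ‖(1 - b) • (-x) + b • z‖ := by rw [norm_smul, Real.norm_of_nonneg hb]

theorem one_le_two_mul_add_one_mul {x z : E} {b K : ℝ} (hx : x ≠ 0) (hb : 0 ≤ b)
    (hz : ‖z‖ ≤ K * ‖x‖) (hy : ‖(1 - b) • (-x) + b • z‖ ≤ ‖x‖ / 2) :
    1 ≤ 2 * (K + 1) * b := by
  have hx' : 0 < ‖x‖ := norm_pos_iff.2 hx
  have key := one_sub_mul_norm_le x z hb
  have : (1 - b) * ‖x‖ ≤ b * (K * ‖x‖) + ‖x‖ / 2 := by nlinarith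
  nlinarith

end SegmentRay

open SegmentRay in
theorem dist_hx_to_ray_le_general (m : ℕ) (T : ℝ)
    (h : Euc m → Euc m) (K : ℝ)
    (hgrowth : ∀ x : Euc m, ‖h x‖ ≤ K * max ‖x‖ 1) :
    ∀ x : Euc m, max (2 * T) 1 ≤ ‖x‖ →
      (segment ℝ (-x) (h x) ∩ closedBall (0 : Euc m) T).Nonempty →
      infDist (h x) {z : Euc m | ∃ s : ℝ, 0 ≤ s ∧ z = s • x} ≤ 2 * (K + 1) * T := by
  intro x hx ⟨y, hy_seg, hy_ball⟩
  rw [segment_eq_image] at hy_seg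
  obtain ⟨b, ⟨hb0, hb1⟩, rfl⟩ := hy_seg
  obtain ⟨hx2T, hx1⟩ := max_le_iff.1 hx
  have hy : ‖(1 - b) • (-x) + b • h x‖ ≤ T := mem_closedBall_zero_iff.1 hy_ball
  have hz : ‖h x‖ ≤ K * ‖x‖ := by simpa [max_eq_left hx1] using hgrowth x
  have hb : 1 ≤ 2 * (K + 1) * b :=
    one_le_two_mul_add_one_mul (norm_pos_iff.1 (by linarith)) hb0 hz (by linarith)
  have hb_pos : 0 < b := hb0.lt_of_ne (by rintro rfl; linarith)
  calc infDist (h x) (posRay x) ≤ ‖(1 - b) • (-x) + b • h x‖ / b :=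
        infDist_posRay_le hb_pos hb1
    _ ≤ T / b := by gcongr
    _ ≤ 2 * (K + 1) * T := by
      rw [div_le_iff₀ hb_pos]
      nlinarith [(norm_nonneg _).trans hy]

/-- If `‖h(x)‖ ≤ K · max{‖x‖, 1}` for all `x`, then with `C = 2(K+1)`: for every `x`
with `‖x‖ ≥ max{2T, 1}` such that the segment from `-x` to `h(x)` meets the closed
ball of radius `T` about the origin, the distance from `h(x)` to the ray
`{s • x : s ≥ 0}` is at most `C·T`. -/
theorem dist_hx_to_ray_le (m : ℕ) (hm : 1 ≤ m) (T : ℝ) (hT : 0 < T)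
    (h : Euc m → Euc m) (K : ℝ) (hK : 0 < K)
    (hgrowth : ∀ x : Euc m, ‖h x‖ ≤ K * max ‖x‖ 1) :
    ∀ x : Euc m, max (2 * T) 1 ≤ ‖x‖ →
      (segment ℝ (-x) (h x) ∩ closedBall (0 : Euc m) T).Nonempty →
      infDist (h x) {z : Euc m | ∃ s : ℝ, 0 ≤ s ∧ z = s • x} ≤ 2 * (K + 1) * T :=
  dist_hx_to_ray_le_general m T h K hgrowth
end
end
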